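/- If n ∈ ℤ satisfies η(n) = 1, and n = 2^a m with a ≥ 0 and m odd, then n ∈ Per_{p_{a+1}}(η): for all ℓ ∈ ℤ, η(n + p_{a+1} ℓ) = 1. -/

import Mathlib

open scoped BigOperators

-- The indicator function of the `\mathscr{B}`-free integers for
--`\mathscr{B} = {2^i b_i : i \ge 1}`. 
open Classical in
noncomputable def eta (b : ℕ → ℕ) : ℤ → ℕ := fun n =>
  if (∀ i : ℕ, 1 ≤ i → ¬ ((2 : ℤ) ^ i * (b i : ℤ) ∣ n)) then 1 else 0

-- `Per x s` is the set of `s`-periodic positions of `x`. 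
def Per (x : ℤ → ℕ) (s : ℕ) : Set ℤ := {n : ℤ | ∀ k : ℤ, x (n + k * s) = x n}

-- `pp b t = 2^t * b_1 * b_2 * \cdots * b_t`. 
def pp (b : ℕ → ℕ) (t : ℕ) : ℕ := 2 ^ t * ∏ i ∈ Finset.Icc 1 t, b i

/- If `η(n) = 1` and `2^a ‖ n`, a multiple `2^i b_i` dividing `n + p_{a+1} ℓ` is impossible:
for `i ≤ a + 1` it divides `p_{a+1}`, hence `n`; for `i > a + 1` the power `2^(a+1)` divides
both `n + p_{a+1} ℓ` and `p_{a+1}`, hence `n`, contradicting `2^a ‖ n`. -/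

theorem eta_eq_one_iff (b : ℕ → ℕ) (n : ℤ) :
    eta b n = 1 ↔ ∀ i : ℕ, 1 ≤ i → ¬ (2 : ℤ) ^ i * (b i : ℤ) ∣ n := by
  unfold eta
  split_ifs with h
  · exact iff_of_true rfl h
  · simp [h]

theorem two_pow_dvd_pp (b : ℕ → ℕ) (t : ℕ) : (2 : ℤ) ^ t ∣ (pp b t : ℤ) := by
  simp only [pp, Nat.cast_mul, Nat.cast_pow, Nat.cast_ofNat]
  exact dvd_mul_right _ _

theorem two_pow_mul_dvd_pp (b : ℕ → ℕ) {i t : ℕ} (hi : 1 ≤ i) (hit : i ≤ t) :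
    (2 : ℤ) ^ i * (b i : ℤ) ∣ (pp b t : ℤ) := by
  simp only [pp, Nat.cast_mul, Nat.cast_pow, Nat.cast_ofNat, Nat.cast_prod]
  exact mul_dvd_mul (pow_dvd_pow 2 hit) (Finset.dvd_prod_of_mem _ (Finset.mem_Icc.mpr ⟨hi, hit⟩))

theorem not_two_pow_succ_dvd_two_pow_mul_odd {a : ℕ} {m : ℤ} (hm : Odd m) :
    ¬ (2 : ℤ) ^ (a + 1) ∣ 2 ^ a * m := by
  rw [pow_succ, mul_dvd_mul_iff_left (pow_ne_zero a two_ne_zero), ← even_iff_two_dvd]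
  exact Int.not_even_iff_odd.mpr hm

theorem eta_one_periodic_general (b : ℕ → ℕ)
    (n : ℤ) (hn : eta b n = 1) (a : ℕ) (m : ℤ) (hm : Odd m)
    (hnm : n = 2 ^ a * m) :
    ∀ ℓ : ℤ, eta b (n + (pp b (a + 1) : ℤ) * ℓ) = 1 := by
  intro ℓ
  rw [eta_eq_one_iff] at hn ⊢
  intro i hi hdvd
  rcases le_or_gt i (a + 1) with hle | hlt
  · exact hn i hi ((dvd_add_left ((two_pow_mul_dvd_pp b hi hle).mul_right ℓ)).mp hdvd)
  · have h2n : (2 : ℤ) ^ (a + 1) ∣ n + (pp b (a + 1) : ℤ) * ℓ :=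
      ((pow_dvd_pow 2 hlt.le).mul_right _).trans hdvd
    rw [dvd_add_left ((two_pow_dvd_pp b (a + 1)).mul_right ℓ), hnm] at h2n
    exact not_two_pow_succ_dvd_two_pow_mul_odd hm h2n

theorem eta_one_periodic (b : ℕ → ℕ)
    (hodd : ∀ i : ℕ, 1 ≤ i → Odd (b i))
    (hgt : ∀ i : ℕ, 1 ≤ i → 1 < b i)
    (hcop : ∀ i j : ℕ, 1 ≤ i → 1 ≤ j → i ≠ j → Nat.Coprime (b i) (b j))
    (n : ℤ) (hn : eta b n = 1) (a : ℕ) (m : ℤ) (hm : Odd m)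
    (hnm : n = 2 ^ a * m) :
    ∀ ℓ : ℤ, eta b (n + (pp b (a + 1) : ℤ) * ℓ) = 1 :=
  eta_one_periodic_general b n hn a m hm hnm
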